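/- Let G be a group acting on a set, a an element with automorphism group Aut(a) acting transitively on a set C of cuts, and Aut(ā) × Aut(A) acting transitively on a set G' of graftings, with stabilisers Aut_c(a) and Aut_b(ā) × Aut_b(A) respectively, and a natural isomorphism Aut_c(a) ≅ Aut_b(ā) × Aut_b(A). Then |C|/|G'| = |Aut(a)|/(|Aut(A)|·|Aut(ā)|), i.e., |C| = (σ(a)/(σ(A)σ(ā)))·|G'|. -/

import Mathlib

theorem MulAction.card_mul_card_stabilizer_of_pretransitive (G : Type*) {X : Type*} [Group G]
    [MulAction G X] [hX : IsPretransitive G X] (x : X) :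
    Nat.card X * Nat.card (stabilizer G x) = Nat.card G := by
  rw [← index_stabilizer_of_transitive G x, mul_comm, Subgroup.card_mul_index]

theorem cuts_graftings_count_general {G1 GA GB C G' : Type*} [Group G1] [Group GA] [Group GB]
    [MulAction G1 C] [MulAction (GA × GB) G']
    (h1 : MulAction.IsPretransitive G1 C)
    (h2 : MulAction.IsPretransitive (GA × GB) G')
    (c : C) (b : G')
    (e : MulAction.stabilizer G1 c ≃* MulAction.stabilizer (GA × GB) b) :
    Nat.card C * (Nat.card GA * Nat.card GB) = Nat.card G1 * Nat.card G' := by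
  have hC := MulAction.card_mul_card_stabilizer_of_pretransitive (hX := h1) G1 c
  have hG' := MulAction.card_mul_card_stabilizer_of_pretransitive (hX := h2) (GA × GB) b
  rw [← Nat.card_prod, ← hC, ← hG', Nat.card_congr e.toEquiv]
  ring

/-- if `Aut(a)` acts transitively on the set `C` of cuts,
`Aut(ā) × Aut(A)` acts transitively on the set `G'` of graftings, and the
point stabilisers are isomorphic, then
`|C|·|Aut(A)|·|Aut(ā)| = |Aut(a)|·|G'|`, i.e. `|C| = (σ(a)/(σ(A)σ(ā)))·|G'|`. -/
theorem cuts_graftings_count {G1 GA GB C G' : Type*} [Group G1] [Group GA] [Group GB]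
    [Finite G1] [Finite GA] [Finite GB] [Finite C] [Finite G']
    [Nonempty C] [Nonempty G'] [MulAction G1 C] [MulAction (GA × GB) G']
    (h1 : MulAction.IsPretransitive G1 C)
    (h2 : MulAction.IsPretransitive (GA × GB) G')
    (c : C) (b : G')
    (e : MulAction.stabilizer G1 c ≃* MulAction.stabilizer (GA × GB) b) :
    Nat.card C * (Nat.card GA * Nat.card GB) = Nat.card G1 * Nat.card G' :=
  cuts_graftings_count_general h1 h2 c b e
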